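/- Let b ∈ NS(R), let l_Z : Λ_Z → ℤ be a homomorphism, and let δ̄, δ̄′ ∈ P∨ with δ̄ − δ̄′ ∈ Q∨. If the homomorphism l_Z ⊕ b(−δ̄ ⊗ _) : Λ_Z ⊕ Q∨ → ℤ extends to a ℤ-linear map Λ → ℤ, then the homomorphism l_Z ⊕ b(−δ̄′ ⊗ _) : Λ_Z ⊕ Q∨ → ℤ also extends to a ℤ-linear map Λ → ℤ. (This is the paper's Lemma that condition (1) in the definition of the Néron–Severi group NS(M_G^d) of a reductive group G holds for every lift δ̄ of d̄ ∈ π₁(Ḡ) as soon as it holds for one lift.) -/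

import Mathlib

/-- `b` is (the `ℚ`-bilinear extension of) a `W`-invariant symmetric even
`ℤ`-bilinear form on the coroot lattice `Q`, i.e. an element of `NS(R)`. -/
def IsNSForm {V : Type*} [AddCommGroup V] [Module ℚ V]
    (W : Subgroup (V ≃ₗ[ℚ] V)) (Q : AddSubgroup V)
    (b : V →ₗ[ℚ] V →ₗ[ℚ] ℚ) : Prop :=
  (∀ x y : V, b x y = b y x) ∧
  (∀ w ∈ W, ∀ x y : V, b (w x) (w y) = b x y) ∧
  (∀ x ∈ Q, ∀ y ∈ Q, ∃ n : ℤ, b x y = (n : ℚ)) ∧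
  (∀ x ∈ Q, ∃ n : ℤ, b x x = 2 * (n : ℚ))

/-!
If `L : Λ →+ ℤ` extends `l_Z ⊕ b(-δ ⊗ _)`, then `L + b(δ - δ' ⊗ pr_V _)` extends
`l_Z ⊕ b(-δ' ⊗ _)`, so it suffices that `b(x, y) ∈ ℤ` for `x ∈ P∨` and `y ∈ Q∨`. On a coroot
`y = α∨`, invariance of `b` under the reflection `s_α` gives `2 b(x, α∨) = α(x) b(α∨, α∨)`, and
`b(α∨, α∨)` is even.
-/

theorem two_mul_apply_eq_of_reflection_invariant {R M : Type*} [CommRing R] [AddCommGroup M]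
    [Module R M] {f : Module.Dual R M} {x : M} (hfx : f x = 2) (b : M →ₗ[R] M →ₗ[R] R)
    (hb : ∀ y z, b (Module.reflection hfx y) (Module.reflection hfx z) = b y z) (y : M) :
    2 * b y x = f y * b x x := by
  have h := hb y x
  simp only [Module.reflection_apply_self, Module.reflection_apply, map_neg, map_sub,
    map_smul, LinearMap.sub_apply, LinearMap.smul_apply, smul_eq_mul] at h
  linear_combination -h

theorem exists_int_apply_eq_of_mem_closure_coroot {V ι : Type*} [AddCommGroup V] [Module ℚ V]
    {root : ι → Module.Dual ℚ V} {coroot : ι → V} (hpair : ∀ i, root i (coroot i) = 2)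
    (b : V →ₗ[ℚ] V →ₗ[ℚ] ℚ)
    (hinv : ∀ i y z, b (Module.reflection (hpair i) y) (Module.reflection (hpair i) z) = b y z)
    (heven : ∀ i, ∃ n : ℤ, b (coroot i) (coroot i) = 2 * n)
    {x : V} (hx : ∀ i, ∃ n : ℤ, root i x = n) {y : V}
    (hy : y ∈ AddSubgroup.closure (Set.range coroot)) : ∃ n : ℤ, b x y = n := by
  suffices AddSubgroup.closure (Set.range coroot) ≤
      (Int.castAddHom ℚ).range.comap (b x).toAddMonoidHom by
    obtain ⟨n, hn⟩ := this hy
    exact ⟨n, hn.symm⟩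
  refine (AddSubgroup.closure_le _).2 ?_
  rintro _ ⟨i, rfl⟩
  obtain ⟨m, hm⟩ := hx i
  obtain ⟨n, hn⟩ := heven i
  have h := two_mul_apply_eq_of_reflection_invariant (hpair i) b (hinv i) x
  rw [hm, hn] at h
  refine ⟨m * n, ?_⟩
  simp only [Int.coe_castAddHom, Int.cast_mul, LinearMap.toAddMonoidHom_coe]
  linarith

theorem AddMonoidHom.exists_intCast_eq_of_forall_exists_int {M : Type*} [AddCommGroup M]
    (f : M →+ ℚ) (hf : ∀ x, ∃ n : ℤ, f x = n) : ∃ g : M →+ ℤ, ∀ x, (g x : ℚ) = f x := by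
  choose g hg using hf
  refine ⟨AddMonoidHom.mk' g fun x y => Int.cast_injective (α := ℚ) ?_, fun x => (hg x).symm⟩
  push_cast
  rw [← hg, ← hg, ← hg, map_add]

theorem ns_condition_independent_of_lift_general
    (V : Type*) [AddCommGroup V] [Module ℚ V]
    (ι : Type*)
    (root : ι → (V →ₗ[ℚ] ℚ)) (coroot : ι → V)
    (hpair : ∀ i, root i (coroot i) = 2)
    (W : Subgroup (V ≃ₗ[ℚ] V))
    (hW : W = Subgroup.closure (Set.range fun i => Module.reflection (hpair i)))
    (Q : AddSubgroup V)
    (hQ : Q = AddSubgroup.closure (Set.range coroot))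
    -- the lattices `Λ_Z ⊆ U` and `Λ_Z ⊕ Q ⊆ Λ ⊆ U ⊕ V`
    (U : Type*) [AddCommGroup U]
    (ΛZ : AddSubgroup U)
    (Λ : AddSubgroup (U × V))
    (hproj : ∀ x ∈ Λ, ∀ i, ∃ n : ℤ, root i (Prod.snd x) = (n : ℚ))
    -- the data
    (b : V →ₗ[ℚ] V →ₗ[ℚ] ℚ) (hb : IsNSForm W Q b)
    (lZ : ΛZ →+ ℤ)
    (δ δ' : V)
    (hdiff : δ - δ' ∈ Q)
    (hext : ∃ L : Λ →+ ℤ, ∀ (x : Λ) (hz : (x : U × V).1 ∈ ΛZ),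
      (x : U × V).2 ∈ Q →
        ((L x : ℤ) : ℚ) = ((lZ ⟨(x : U × V).1, hz⟩ : ℤ) : ℚ) + b (-δ) (x : U × V).2) :
    ∃ L : Λ →+ ℤ, ∀ (x : Λ) (hz : (x : U × V).1 ∈ ΛZ),
      (x : U × V).2 ∈ Q →
        ((L x : ℤ) : ℚ) = ((lZ ⟨(x : U × V).1, hz⟩ : ℤ) : ℚ) + b (-δ') (x : U × V).2 := by
  obtain ⟨hsymm, hinv, -, heven⟩ := hb
  obtain ⟨L, hL⟩ := hext
  have hreflection_mem (i : ι) : Module.reflection (hpair i) ∈ W :=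
    hW ▸ Subgroup.subset_closure ⟨i, rfl⟩
  have hcoroot_mem (i : ι) : coroot i ∈ Q := hQ ▸ AddSubgroup.subset_closure ⟨i, rfl⟩
  have hint (x : Λ) : ∃ n : ℤ, b (δ - δ') (x : U × V).2 = n := by
    rw [hsymm]
    exact exists_int_apply_eq_of_mem_closure_coroot hpair b
      (fun i => hinv _ (hreflection_mem i)) (fun i => heven _ (hcoroot_mem i))
      (hproj x x.2) (hQ ▸ hdiff)
  obtain ⟨g, hg⟩ := ((b (δ - δ')).toAddMonoidHom.comp
    ((AddMonoidHom.snd U V).comp Λ.subtype)).exists_intCast_eq_of_forall_exists_int hint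
  refine ⟨L + g, fun x hz hq => ?_⟩
  rw [AddMonoidHom.add_apply, Int.cast_add, hL x hz hq, hg]
  simp only [map_neg, LinearMap.neg_apply, map_sub, LinearMap.sub_apply, AddMonoidHom.coe_comp,
    LinearMap.toAddMonoidHom_coe, AddMonoidHom.coe_snd, AddSubgroup.coe_subtype,
    Function.comp_apply]
  ring

/-- Let `b ∈ NS(R)`, `lZ : Λ_Z → ℤ`, and `δ, δ' ∈ P∨` with `δ - δ' ∈ Q`.
If `lZ ⊕ b(-δ ⊗ _) : Λ_Z ⊕ Q → ℤ` extends to a `ℤ`-linear map `Λ → ℤ`,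
then so does `lZ ⊕ b(-δ' ⊗ _)`.  Here `Λ ⊆ U ⊕ V` contains `Λ_Z ⊕ Q` with
finite index and projects into `P∨` on the `V`-factor. -/
theorem ns_condition_independent_of_lift
    (V : Type*) [AddCommGroup V] [Module ℚ V] [FiniteDimensional ℚ V]
    (ι : Type*) [Fintype ι]
    (root : ι → (V →ₗ[ℚ] ℚ)) (coroot : ι → V)
    (hpair : ∀ i, root i (coroot i) = 2)
    (hcrys : ∀ i j, ∃ n : ℤ, root i (coroot j) = (n : ℚ))
    (hreduced : ∀ i j, (∃ c : ℚ, root j = c • root i) →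
      root j = root i ∨ root j = -root i)
    (hrefl_co : ∀ i j, ∃ k, Module.reflection (hpair i) (coroot j) = coroot k)
    (hrefl_root : ∀ i j, ∃ k, ∀ x : V,
      root j (Module.reflection (hpair i) x) = root k x)
    (hspan : Submodule.span ℚ (Set.range coroot) = ⊤)
    (W : Subgroup (V ≃ₗ[ℚ] V))
    (hW : W = Subgroup.closure (Set.range fun i => Module.reflection (hpair i)))
    (Q : AddSubgroup V)
    (hQ : Q = AddSubgroup.closure (Set.range coroot))
    -- the lattices `Λ_Z ⊆ U` and `Λ_Z ⊕ Q ⊆ Λ ⊆ U ⊕ V`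
    (U : Type*) [AddCommGroup U] [Module ℚ U] [FiniteDimensional ℚ U]
    (ΛZ : AddSubgroup U) (hΛZfg : ΛZ.FG)
    (Λ : AddSubgroup (U × V))
    (hsub : ΛZ.prod Q ≤ Λ)
    (hfin : ((ΛZ.prod Q).addSubgroupOf Λ).FiniteIndex)
    (hproj : ∀ x ∈ Λ, ∀ i, ∃ n : ℤ, root i (Prod.snd x) = (n : ℚ))
    -- the data
    (b : V →ₗ[ℚ] V →ₗ[ℚ] ℚ) (hb : IsNSForm W Q b)
    (lZ : ΛZ →+ ℤ)
    (δ δ' : V)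
    (hδ : ∀ i, ∃ n : ℤ, root i δ = (n : ℚ))
    (hδ' : ∀ i, ∃ n : ℤ, root i δ' = (n : ℚ))
    (hdiff : δ - δ' ∈ Q)
    (hext : ∃ L : Λ →+ ℤ, ∀ (x : Λ) (hz : (x : U × V).1 ∈ ΛZ),
      (x : U × V).2 ∈ Q →
        ((L x : ℤ) : ℚ) = ((lZ ⟨(x : U × V).1, hz⟩ : ℤ) : ℚ) + b (-δ) (x : U × V).2) :
    ∃ L : Λ →+ ℤ, ∀ (x : Λ) (hz : (x : U × V).1 ∈ ΛZ),
      (x : U × V).2 ∈ Q →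
        ((L x : ℤ) : ℚ) = ((lZ ⟨(x : U × V).1, hz⟩ : ℤ) : ℚ) + b (-δ') (x : U × V).2 :=
  ns_condition_independent_of_lift_general V ι root coroot hpair W hW Q hQ U ΛZ Λ hproj b hb lZ δ δ'
    hdiff hext
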